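/- arXiv:0911.5263 — 2 statements merged into one kernel-verified Lean document; each statement's English description precedes it below -/
import Mathlib

section
/- Let A and B be nonempty subsets of a metric space (X,d) such that A is complete. If the pair (A,B) has property UC, then (A,B) has property WUC. -/
open Filter Metric

/-- The distance between two sets: `inf {d(x,y) : x ∈ A, y ∈ B}`. -/
noncomputable def setDist {X : Type*} [PseudoMetricSpace X] (A B : Set X) : ℝ :=
  sInf (Set.image2 dist A B)

/-- Property UC for a pair of subsets of a metric space. -/
def PropUC {X : Type*} [MetricSpace X] (A B : Set X) : Prop :=
  ∀ x x' y : ℕ → X, (∀ n, x n ∈ A) → (∀ n, x' n ∈ A) → (∀ n, y n ∈ B) →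
    Tendsto (fun n => dist (x n) (y n)) atTop (nhds (setDist A B)) →
    Tendsto (fun n => dist (x' n) (y n)) atTop (nhds (setDist A B)) →
    Tendsto (fun n => dist (x n) (x' n)) atTop (nhds 0)

/-- Property WUC for a pair of subsets of a metric space. -/
def PropWUC {X : Type*} [MetricSpace X] (A B : Set X) : Prop :=
  ∀ x : ℕ → X, (∀ n, x n ∈ A) →
    (∀ ε > (0 : ℝ), ∃ y ∈ B, ∃ m₀ : ℕ, ∀ m ≥ m₀, dist (x m) y ≤ setDist A B + ε) →
    ∃ z, Tendsto x atTop (nhds z)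

lemma setDist_le_dist {X : Type*} [MetricSpace X] {A B : Set X} {a b : X}
    (ha : a ∈ A) (hb : b ∈ B) : setDist A B ≤ dist a b := by
  apply csInf_le
  · exact ⟨0, by rintro _ ⟨u, _, v, _, rfl⟩; exact dist_nonneg⟩
  · exact Set.mem_image2_of_mem ha hb

theorem prop_WUC_of_prop_UC {X : Type*} [MetricSpace X] (A B : Set X)
    (hA : A.Nonempty) (hB : B.Nonempty) (hAcomplete : IsComplete A)
    (hUC : PropUC A B) : PropWUC A B := by
  intro x hx hyp
  -- It suffices to show x is Cauchy
  have hcauchy : CauchySeq x := by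
    rw [Metric.cauchySeq_iff]
    by_contra hnot
    push_neg at hnot
    obtain ⟨ε, hε, hbad⟩ := hnot
    -- For each k, pick y k ∈ B and m₀ k from the hypothesis with ε = 1/(k+1)
    have hyk : ∀ k : ℕ, ∃ y ∈ B, ∃ m₀ : ℕ, ∀ m ≥ m₀,
        dist (x m) y ≤ setDist A B + 1 / (k + 1) := by
      intro k
      exact hyp (1 / (k + 1)) (by positivity)
    choose y hyB m₀ hm₀ using hyk
    -- For each k, pick indices m k, n k ≥ m₀ k with dist ≥ ε
    have hmn : ∀ k : ℕ, ∃ m ≥ m₀ k, ∃ n ≥ m₀ k, ε ≤ dist (x m) (x n) := by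
      intro k
      obtain ⟨m, hm, n, hn, h⟩ := hbad (m₀ k)
      exact ⟨m, hm, n, hn, h⟩
    choose m hm n hn hme using hmn
    -- squeeze
    have haux : Tendsto (fun k : ℕ => setDist A B + 1 / (k + 1 : ℝ)) atTop
        (nhds (setDist A B)) := by
      have : Tendsto (fun k : ℕ => 1 / (k + 1 : ℝ)) atTop (nhds 0) :=
        tendsto_one_div_add_atTop_nhds_zero_nat
      simpa using (tendsto_const_nhds.add this)
    have t1 : Tendsto (fun k => dist (x (m k)) (y k)) atTop (nhds (setDist A B)) := by
      apply tendsto_of_tendsto_of_tendsto_of_le_of_le tendsto_const_nhds haux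
      · intro k; exact setDist_le_dist (hx (m k)) (hyB k)
      · intro k; exact hm₀ k (m k) (hm k)
    have t2 : Tendsto (fun k => dist (x (n k)) (y k)) atTop (nhds (setDist A B)) := by
      apply tendsto_of_tendsto_of_tendsto_of_le_of_le tendsto_const_nhds haux
      · intro k; exact setDist_le_dist (hx (n k)) (hyB k)
      · intro k; exact hm₀ k (n k) (hn k)
    have t0 := hUC (fun k => x (m k)) (fun k => x (n k)) y
      (fun k => hx (m k)) (fun k => hx (n k)) hyB t1 t2
    have := (t0.eventually (eventually_lt_nhds hε)).exists
    obtain ⟨k, hk⟩ := this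
    exact absurd (hme k) (not_le.mpr hk)
  obtain ⟨z, _, hz⟩ := cauchySeq_tendsto_of_isComplete hAcomplete hx hcauchy
  exact ⟨z, hz⟩
end

section
/- Let A and B = A + h be proximinal parallel subsets of a Banach space X with ‖h‖ = dist(A,B) = d, and let T be a cyclic contraction on A∪B with constant k ∈ (0,1). Then the map T' : B → B defined by T'(b) = Tb + h is a contraction with constant k for the semimetric d₁, i.e., d₁(T'x, T'y) ≤ k·d₁(x,y) for all x,y ∈ B, where d₁(x,y) = inf{r > 0 : ‖y−(x−h)‖ ≤ d+r and ‖y−(x+h)‖ ≤ d+r}. -/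
open Filter Metric

/-- `(A,B)` is a sharp proximinal pair. -/
def SharpProximinalPair {X : Type*} [NormedAddCommGroup X] (A B : Set X) : Prop :=
  ∀ x ∈ A, ∀ y ∈ B, ∃! p : X × X,
    p.1 ∈ A ∧ p.2 ∈ B ∧ dist x p.2 = setDist A B ∧ dist p.1 y = setDist A B

/-- `A` and `B` are proximinal parallel sets, with `B = A + h` and `‖h‖ = dist(A,B)`. -/
def ProximinalParallel {X : Type*} [NormedAddCommGroup X] (A B : Set X) (h : X) : Prop :=
  SharpProximinalPair A B ∧ B = (fun a => a + h) '' A ∧ ‖h‖ = setDist A B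

/-- The semimetric `d₁(x,y) = inf {r > 0 : ‖y - (x - h)‖ ≤ d + r and ‖y - (x + h)‖ ≤ d + r}`. -/
noncomputable def semiD1 {X : Type*} [NormedAddCommGroup X] (h : X) (d : ℝ) (x y : X) : ℝ :=
  sInf {r : ℝ | 0 < r ∧ ‖y - (x - h)‖ ≤ d + r ∧ ‖y - (x + h)‖ ≤ d + r}

/-!
Sharpness forces a cyclic contraction to commute with the translation: `T (b - h) = T b + h`
on `B`. Indeed `(b - h, b)` is a proximal pair, hence so is `(T b, T (b - h))`, and the unique
best proximity pair attached to a proximal pair `(u, v)` is both `(u, v)` and `(v - h, u + h)`,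
so `v = u + h`. With this identity the two constraints defining `d₁(T'x, T'y)` are the
contraction inequality for the pairs `(x - h, y)` and `(y - h, x)`, which turns a witness `r`
for `d₁(x, y)` into the witness `k r` for `d₁(T'x, T'y)`.
-/

open Set

section PseudoMetric

variable {X : Type*} [PseudoMetricSpace X]

theorem setDist_le_dist_s16 {A B : Set X} {x y : X} (hx : x ∈ A) (hy : y ∈ B) :
    setDist A B ≤ dist x y :=
  csInf_le ⟨0, by rintro _ ⟨_, -, _, -, rfl⟩; exact dist_nonneg⟩ (mem_image2_of_mem hx hy)

def IsCyclicContraction (A B : Set X) (T : X → X) (k : ℝ) : Prop :=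
  MapsTo T A B ∧ MapsTo T B A ∧
    ∀ x ∈ A, ∀ y ∈ B, dist (T x) (T y) ≤ k * dist x y + (1 - k) * setDist A B

namespace IsCyclicContraction

variable {A B : Set X} {T : X → X} {k : ℝ}

theorem dist_map_le (hT : IsCyclicContraction A B T k) (hk : 0 ≤ k) {x y : X} (hx : x ∈ A)
    (hy : y ∈ B) {r : ℝ} (hr : dist x y ≤ setDist A B + r) :
    dist (T x) (T y) ≤ setDist A B + k * r :=
  calc dist (T x) (T y) ≤ k * dist x y + (1 - k) * setDist A B := hT.2.2 x hx y hy
    _ ≤ k * (setDist A B + r) + (1 - k) * setDist A B := by gcongr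
    _ = setDist A B + k * r := by ring

theorem dist_map_eq_setDist (hT : IsCyclicContraction A B T k) {x y : X} (hx : x ∈ A)
    (hy : y ∈ B) (hxy : dist x y = setDist A B) :
    dist (T y) (T x) = setDist A B := by
  refine le_antisymm ?_ (setDist_le_dist_s16 (hT.2.1 hy) (hT.1 hx))
  calc dist (T y) (T x) = dist (T x) (T y) := dist_comm _ _
    _ ≤ k * dist x y + (1 - k) * setDist A B := hT.2.2 x hx y hy
    _ = setDist A B := by rw [hxy]; ring

end IsCyclicContraction

end PseudoMetric

section SemiD1

variable {X : Type*} [NormedAddCommGroup X] {h : X} {d : ℝ}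

theorem semiD1_le {x y : X} {r : ℝ} (hr : 0 < r) (hm : ‖y - (x - h)‖ ≤ d + r)
    (hp : ‖y - (x + h)‖ ≤ d + r) : semiD1 h d x y ≤ r :=
  csInf_le ⟨0, fun _ hs => hs.1.le⟩ ⟨hr, hm, hp⟩

theorem semiD1_le_mul_of_forall {x y x' y' : X} {k : ℝ} (hk : 0 < k)
    (H : ∀ r, 0 < r → ‖y - (x - h)‖ ≤ d + r → ‖y - (x + h)‖ ≤ d + r →
      semiD1 h d x' y' ≤ k * r) :
    semiD1 h d x' y' ≤ k * semiD1 h d x y := by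
  rw [← div_le_iff₀' hk]
  refine le_csInf ?_ fun r ⟨hr, hm, hp⟩ => (div_le_iff₀' hk).2 (H r hr hm hp)
  refine ⟨|d| + ‖y - (x - h)‖ + ‖y - (x + h)‖ + 1, by positivity, ?_, ?_⟩ <;>
    linarith [neg_abs_le d, norm_nonneg (y - (x - h)), norm_nonneg (y - (x + h))]

end SemiD1

namespace ProximinalParallel

variable {X : Type*} [NormedAddCommGroup X] {A B : Set X} {h : X} {T : X → X} {k : ℝ}

theorem add_mem (hpar : ProximinalParallel A B h) {a : X} (ha : a ∈ A) : a + h ∈ B :=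
  hpar.2.1 ▸ mem_image_of_mem _ ha

theorem sub_mem (hpar : ProximinalParallel A B h) {b : X} (hb : b ∈ B) : b - h ∈ A := by
  rw [hpar.2.1] at hb
  obtain ⟨a, ha, rfl⟩ := hb
  simpa using ha

theorem eq_add_of_dist_eq (hpar : ProximinalParallel A B h) {u v : X} (hu : u ∈ A) (hv : v ∈ B)
    (huv : dist u v = setDist A B) : v = u + h := by
  obtain ⟨p, -, huniq⟩ := hpar.1 u hu v hv
  have hself := huniq (u, v) ⟨hu, hv, huv, huv⟩
  have hshift := huniq (v - h, u + h)
    ⟨hpar.sub_mem hv, hpar.add_mem hu, by simp [hpar.2.2], by simp [hpar.2.2]⟩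
  exact congrArg Prod.snd (hself.trans hshift.symm)

theorem map_sub_eq (hpar : ProximinalParallel A B h) (hT : IsCyclicContraction A B T k)
    {b : X} (hb : b ∈ B) : T (b - h) = T b + h :=
  hpar.eq_add_of_dist_eq (hT.2.1 hb) (hT.1 (hpar.sub_mem hb))
    (hT.dist_map_eq_setDist (hpar.sub_mem hb) hb (by simp [hpar.2.2]))

theorem semiD1_map_add_le (hpar : ProximinalParallel A B h) (hT : IsCyclicContraction A B T k)
    (hk : 0 < k) {x y : X} (hx : x ∈ B) (hy : y ∈ B) :
    semiD1 h (setDist A B) (T x + h) (T y + h) ≤ k * semiD1 h (setDist A B) x y := by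
  refine semiD1_le_mul_of_forall hk fun r hr hm hp => semiD1_le (by positivity) ?_ ?_
  · calc ‖T y + h - (T x + h - h)‖ = dist (T (y - h)) (T x) := by
          rw [hpar.map_sub_eq hT hy, dist_eq_norm]; abel_nf
      _ ≤ setDist A B + k * r := hT.dist_map_le hk.le (hpar.sub_mem hy) hx
          (by rwa [dist_eq_norm, sub_sub, add_comm h x])
  · calc ‖T y + h - (T x + h + h)‖ = dist (T (x - h)) (T y) := by
          rw [hpar.map_sub_eq hT hx, dist_eq_norm, ← norm_neg]; abel_nf
      _ ≤ setDist A B + k * r := hT.dist_map_le hk.le (hpar.sub_mem hx) hy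
          (by rwa [dist_comm, dist_eq_norm])

end ProximinalParallel

theorem translated_map_is_d1_contraction_general {X : Type*} [NormedAddCommGroup X]
    (A B : Set X) (h : X)
    (hpar : ProximinalParallel A B h)
    (d : ℝ) (hd : d = setDist A B)
    (T : X → X) (k : ℝ) (hk0 : 0 < k)
    (hTA : Set.MapsTo T A B) (hTB : Set.MapsTo T B A)
    (hTcontr : ∀ x ∈ A, ∀ y ∈ B, dist (T x) (T y) ≤ k * dist x y + (1 - k) * setDist A B) :
    Set.MapsTo (fun b => T b + h) B B ∧
      ∀ x ∈ B, ∀ y ∈ B, semiD1 h d (T x + h) (T y + h) ≤ k * semiD1 h d x y := by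
  have hT : IsCyclicContraction A B T k := ⟨hTA, hTB, hTcontr⟩
  subst hd
  exact ⟨fun b hb => hpar.add_mem (hTB hb), fun x hx y hy => hpar.semiD1_map_add_le hT hk0 hx hy⟩

theorem translated_map_is_d1_contraction {X : Type*} [NormedAddCommGroup X]
    [NormedSpace ℝ X] [CompleteSpace X]
    (A B : Set X) (hA : A.Nonempty) (hB : B.Nonempty) (h : X)
    (hpar : ProximinalParallel A B h)
    (d : ℝ) (hd : d = setDist A B)
    (T : X → X) (k : ℝ) (hk0 : 0 < k) (hk1 : k < 1)
    (hTA : Set.MapsTo T A B) (hTB : Set.MapsTo T B A)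
    (hTcontr : ∀ x ∈ A, ∀ y ∈ B, dist (T x) (T y) ≤ k * dist x y + (1 - k) * setDist A B) :
    Set.MapsTo (fun b => T b + h) B B ∧
      ∀ x ∈ B, ∀ y ∈ B, semiD1 h d (T x + h) (T y + h) ≤ k * semiD1 h d x y :=
  translated_map_is_d1_contraction_general A B h hpar d hd T k hk0 hTA hTB hTcontr
end
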